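/- There exists a constant C > 0, depending only on α, |θ|, |σ| and P = sup_{π ∈ 𝒞} |π|, such that for all z, z' ∈ ℝ and all u ∈ L²(n) ∩ L^∞(n): |f(z, u) − f(z', u)| ≤ C·(1 + |z| + |z'|)·|z − z'|. -/

import Mathlib

open MeasureTheory

/-! Only the quadratic penalty depends on `z`, and by the difference-of-squares identity it moves by
at most `(α P |σ| + (α/2)(|z| + |z'|) + |θ|) |z - z'|` for every `π ∈ 𝒞`, where `|π| ≤ P` on `𝒞`.
Since `g α ≥ 0`, the objectives are bounded below, so their infima over `𝒞` move by no more;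
the linear term `-θ z` adds `|θ| |z - z'|`. -/

/-- `g α y = (exp(α y) − α y − 1)/α`. -/
noncomputable def g (α y : ℝ) : ℝ := (Real.exp (α * y) - α * y - 1) / α

/-- `u ∈ L²(n) ∩ L^∞(n)`: measurable, square integrable and essentially bounded. -/
def MemL2Linf (n : Measure ℝ) (u : ℝ → ℝ) : Prop :=
  Measurable u ∧ Integrable (fun x => (u x) ^ 2) n ∧ ∃ K : ℝ, ∀ᵐ x ∂n, |u x| ≤ K

/-- The generator
`f(z,u) = inf_{π ∈ 𝒞} [ (α/2)(πσ − (z + θ/α))² + ∫ g_α(u(x) − πβ(x)) dn(x) ] − θz − θ²/(2α)`. -/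
noncomputable def gen (α θ σ : ℝ) (β : ℝ → ℝ) (𝒞 : Set ℝ) (n : Measure ℝ)
    (z : ℝ) (u : ℝ → ℝ) : ℝ :=
  sInf ((fun π => α / 2 * (π * σ - (z + θ / α)) ^ 2
      + ∫ x, g α (u x - π * β x) ∂n) '' 𝒞) - θ * z - θ ^ 2 / (2 * α)

lemma g_nonneg {α : ℝ} (hα : 0 < α) (y : ℝ) : 0 ≤ g α y :=
  div_nonneg (by nlinarith [Real.add_one_le_exp (α * y)]) hα.le

lemma csInf_image_sub_csInf_image_le {A : Set ℝ} (hA : A.Nonempty) {F G : ℝ → ℝ}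
    (hF : BddBelow (F '' A)) {D : ℝ} (h : ∀ a ∈ A, F a - G a ≤ D) :
    sInf (F '' A) - sInf (G '' A) ≤ D := by
  rw [sub_le_comm]
  refine le_csInf (hA.image G) ?_
  rintro _ ⟨a, ha, rfl⟩
  linarith [csInf_le hF ⟨a, ha, rfl⟩, h a ha]

lemma abs_csInf_image_sub_csInf_image_le {A : Set ℝ} (hA : A.Nonempty) {F G : ℝ → ℝ}
    (hF : BddBelow (F '' A)) (hG : BddBelow (G '' A)) {D : ℝ}
    (h : ∀ a ∈ A, |F a - G a| ≤ D) :
    |sInf (F '' A) - sInf (G '' A)| ≤ D := by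
  rw [abs_sub_le_iff]
  exact ⟨csInf_image_sub_csInf_image_le hA hF fun a ha => (abs_sub_le_iff.mp (h a ha)).1,
    csInf_image_sub_csInf_image_le hA hG fun a ha => (abs_sub_le_iff.mp (h a ha)).2⟩

lemma abs_penalty_sub_penalty_le {α : ℝ} (hα : 0 < α) (θ σ π z z' : ℝ) :
    |α / 2 * (π * σ - (z + θ / α)) ^ 2 - α / 2 * (π * σ - (z' + θ / α)) ^ 2|
      ≤ (α * |π| * |σ| + α / 2 * (|z| + |z'|) + |θ|) * |z - z'| := by
  have hsplit : α / 2 * (π * σ - (z + θ / α)) ^ 2 - α / 2 * (π * σ - (z' + θ / α)) ^ 2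
      = (α * (π * σ) - α / 2 * (z + z') - θ) * (z' - z) := by
    field_simp
    ring
  have hfactor : |α * (π * σ) - α / 2 * (z + z') - θ|
      ≤ α * |π| * |σ| + α / 2 * (|z| + |z'|) + |θ| := by
    calc |α * (π * σ) - α / 2 * (z + z') - θ|
        ≤ |α * (π * σ)| + |α / 2 * (z + z')| + |θ| :=
          (abs_sub _ _).trans (add_le_add_left (abs_sub _ _) _)
      _ = α * |π| * |σ| + α / 2 * |z + z'| + |θ| := by
          rw [abs_mul, abs_mul, abs_mul, abs_of_pos hα, abs_of_pos (half_pos hα), mul_assoc]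
      _ ≤ α * |π| * |σ| + α / 2 * (|z| + |z'|) + |θ| := by
          gcongr
          exact abs_add_le z z'
  rw [hsplit, abs_mul, abs_sub_comm z']
  exact mul_le_mul_of_nonneg_right hfactor (abs_nonneg _)

lemma abs_gen_sub_gen_le {α : ℝ} (hα : 0 < α) (θ σ : ℝ) (β : ℝ → ℝ) {𝒞 : Set ℝ}
    (h𝒞ne : 𝒞.Nonempty) {P : ℝ} (hP : ∀ π ∈ 𝒞, |π| ≤ P) (n : Measure ℝ) (z z' : ℝ)
    (u : ℝ → ℝ) :
    |gen α θ σ β 𝒞 n z u - gen α θ σ β 𝒞 n z' u|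
      ≤ (α * P * |σ| + α / 2 * (|z| + |z'|) + 2 * |θ|) * |z - z'| := by
  set F : ℝ → ℝ → ℝ := fun z π => α / 2 * (π * σ - (z + θ / α)) ^ 2
      + ∫ x, g α (u x - π * β x) ∂n
  have hF_bdd (z : ℝ) : BddBelow (F z '' 𝒞) := by
    refine ⟨0, ?_⟩
    rintro _ ⟨π, -, rfl⟩
    exact add_nonneg (by positivity) (integral_nonneg fun x => g_nonneg hα _)
  have hF_close : ∀ π ∈ 𝒞,
      |F z π - F z' π| ≤ (α * P * |σ| + α / 2 * (|z| + |z'|) + |θ|) * |z - z'| := by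
    intro π hπ
    calc |F z π - F z' π|
        = |α / 2 * (π * σ - (z + θ / α)) ^ 2 - α / 2 * (π * σ - (z' + θ / α)) ^ 2| := by
          simp only [F, add_sub_add_right_eq_sub]
      _ ≤ (α * |π| * |σ| + α / 2 * (|z| + |z'|) + |θ|) * |z - z'| :=
          abs_penalty_sub_penalty_le hα θ σ π z z'
      _ ≤ (α * P * |σ| + α / 2 * (|z| + |z'|) + |θ|) * |z - z'| := by
          gcongr
          exact hP π hπ
  calc |gen α θ σ β 𝒞 n z u - gen α θ σ β 𝒞 n z' u|
      = |(sInf (F z '' 𝒞) - sInf (F z' '' 𝒞)) - θ * (z - z')| := by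
        change |(sInf (F z '' 𝒞) - θ * z - θ ^ 2 / (2 * α))
          - (sInf (F z' '' 𝒞) - θ * z' - θ ^ 2 / (2 * α))| = _
        ring_nf
    _ ≤ |sInf (F z '' 𝒞) - sInf (F z' '' 𝒞)| + |θ * (z - z')| := abs_sub _ _
    _ ≤ (α * P * |σ| + α / 2 * (|z| + |z'|) + |θ|) * |z - z'| + |θ| * |z - z'| := by
        rw [abs_mul]
        gcongr
        exact abs_csInf_image_sub_csInf_image_le h𝒞ne (hF_bdd z) (hF_bdd z') hF_close
    _ = (α * P * |σ| + α / 2 * (|z| + |z'|) + 2 * |θ|) * |z - z'| := by ring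

theorem stmt9_general (α θ σ : ℝ) (hα : 0 < α) (n : Measure ℝ)
    (β : ℝ → ℝ)
    (𝒞 : Set ℝ) (h𝒞c : IsCompact 𝒞) (h𝒞ne : 𝒞.Nonempty) :
    ∃ C : ℝ, 0 < C ∧ ∀ (z z' : ℝ) (u : ℝ → ℝ), MemL2Linf n u →
      |gen α θ σ β 𝒞 n z u - gen α θ σ β 𝒞 n z' u| ≤
        C * (1 + |z| + |z'|) * |z - z'| := by
  obtain ⟨P, hP0, hP⟩ := h𝒞c.isBounded.exists_pos_norm_le
  have hP_abs : ∀ π ∈ 𝒞, |π| ≤ P := fun π hπ => by simpa using hP π hπ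
  refine ⟨α * P * |σ| + α / 2 + 2 * |θ|, by positivity, fun z z' u _ => ?_⟩
  refine (abs_gen_sub_gen_le hα θ σ β h𝒞ne hP_abs n z z' u).trans ?_
  gcongr
  have hs : 0 ≤ |z| + |z'| := by positivity
  have hrest : 0 ≤ α * P * |σ| + 2 * |θ| := by positivity
  nlinarith [mul_nonneg hrest hs]

theorem stmt9 (α θ σ : ℝ) (hα : 0 < α) (n : Measure ℝ) [SigmaFinite n]
    (β : ℝ → ℝ) (hβ : MemL2Linf n β)
    (𝒞 : Set ℝ) (h𝒞c : IsCompact 𝒞) (h𝒞ne : 𝒞.Nonempty) (h𝒞0 : (0:ℝ) ∈ 𝒞) :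
    ∃ C : ℝ, 0 < C ∧ ∀ (z z' : ℝ) (u : ℝ → ℝ), MemL2Linf n u →
      |gen α θ σ β 𝒞 n z u - gen α θ σ β 𝒞 n z' u| ≤
        C * (1 + |z| + |z'|) * |z - z'| :=
  stmt9_general α θ σ hα n β 𝒞 h𝒞c h𝒞ne
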